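/- Under the causal factorization where Y is conditionally independent of (Z_c, Z_s) given (A, X), and A is conditionally independent of X given (Z_c, Z_s), the quantity ∑ₓ P(y | z_c, x) P(x) equals ∑ₓ ∑_a P(y | a, x) P(a | z_c, x) P(x), where P(a | z_c, x) = ∑_{z_s} P(a | z_s, z_c) P(z_s | z_c, x). -/
import Mathlib


open scoped Classical

/-- Probability of an event `s` under the weight function `μ` on a finite
sample space. -/
noncomputable def pr {Ω : Type*} [Fintype Ω] (μ : Ω → ℝ) (s : Ω → Prop) : ℝ :=
  ∑ ω, if s ω then μ ω else 0

/-- Conditional probability `P(s | t)` under `μ`. -/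
noncomputable def condPr {Ω : Type*} [Fintype Ω] (μ : Ω → ℝ) (s t : Ω → Prop) : ℝ :=
  pr μ (fun ω => s ω ∧ t ω) / pr μ t

lemma pr_congr {Ω : Type*} [Fintype Ω] (μ : Ω → ℝ) {s t : Ω → Prop}
    (h : ∀ ω, s ω ↔ t ω) : pr μ s = pr μ t := by
  unfold pr
  exact Finset.sum_congr rfl fun ω _ => by simp [h ω]

lemma condPr_congr {Ω : Type*} [Fintype Ω] (μ : Ω → ℝ) {s t s' t' : Ω → Prop}
    (hs : ∀ ω, s ω ↔ s' ω) (ht : ∀ ω, t ω ↔ t' ω) :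
    condPr μ s t = condPr μ s' t' := by
  unfold condPr
  rw [pr_congr μ (fun ω => and_congr (hs ω) (ht ω)), pr_congr μ ht]

lemma pr_partition {Ω α : Type*} [Fintype Ω] [Fintype α] (μ : Ω → ℝ)
    (s : Ω → Prop) (f : Ω → α) :
    pr μ s = ∑ v, pr μ (fun ω => s ω ∧ f ω = v) := by
  unfold pr
  rw [Finset.sum_comm]
  refine Finset.sum_congr rfl fun ω _ => ?_
  by_cases h : s ω <;> simp [h]

lemma pr_and_eq {Ω : Type*} [Fintype Ω] (μ : Ω → ℝ) (s t : Ω → Prop)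
    (ht : pr μ t ≠ 0) : pr μ (fun ω => s ω ∧ t ω) = condPr μ s t * pr μ t := by
  unfold condPr
  field_simp

/-- Under the conditional independences
`P(y | a, x, z_c, z_s) = P(y | a, x)` and `P(a | z_c, z_s, x) = P(a | z_c, z_s)`,
one has `∑ₓ P(y|z_c,x) P(x) = ∑ₓ ∑_a P(y|a,x) P(a|z_c,x) P(x)` where
`P(a|z_c,x) = ∑_{z_s} P(a|z_s,z_c) P(z_s|z_c,x)`. -/
theorem backdoor_marginalize_structure
    {Ω 𝓧 𝓐 𝓩c 𝓩s 𝓨 : Type*} [Fintype Ω] [Fintype 𝓧] [Fintype 𝓐] [Fintype 𝓩s]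
    (μ : Ω → ℝ) (X : Ω → 𝓧) (A : Ω → 𝓐) (Zc : Ω → 𝓩c) (Zs : Ω → 𝓩s) (Y : Ω → 𝓨)
    (hnn : ∀ ω, 0 ≤ μ ω) (hsum : ∑ ω, μ ω = 1)
    (hpos1 : ∀ (a : 𝓐) (x : 𝓧) (zc : 𝓩c) (zs : 𝓩s),
      0 < pr μ (fun ω => A ω = a ∧ X ω = x ∧ Zc ω = zc ∧ Zs ω = zs))
    (hpos2 : ∀ (zc : 𝓩c) (zs : 𝓩s) (x : 𝓧),
      0 < pr μ (fun ω => Zc ω = zc ∧ Zs ω = zs ∧ X ω = x))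
    (hpos3 : ∀ (zc : 𝓩c) (x : 𝓧), 0 < pr μ (fun ω => Zc ω = zc ∧ X ω = x))
    (hpos4 : ∀ (a : 𝓐) (x : 𝓧), 0 < pr μ (fun ω => A ω = a ∧ X ω = x))
    (hpos5 : ∀ (zs : 𝓩s) (zc : 𝓩c), 0 < pr μ (fun ω => Zs ω = zs ∧ Zc ω = zc))
    (hY : ∀ (y : 𝓨) (a : 𝓐) (x : 𝓧) (zc : 𝓩c) (zs : 𝓩s),
      condPr μ (fun ω => Y ω = y)
          (fun ω => A ω = a ∧ X ω = x ∧ Zc ω = zc ∧ Zs ω = zs)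
        = condPr μ (fun ω => Y ω = y) (fun ω => A ω = a ∧ X ω = x))
    (hA : ∀ (a : 𝓐) (zc : 𝓩c) (zs : 𝓩s) (x : 𝓧),
      condPr μ (fun ω => A ω = a) (fun ω => Zc ω = zc ∧ Zs ω = zs ∧ X ω = x)
        = condPr μ (fun ω => A ω = a) (fun ω => Zc ω = zc ∧ Zs ω = zs)) :
    ∀ (y : 𝓨) (zc : 𝓩c),
      (∑ x, condPr μ (fun ω => Y ω = y) (fun ω => Zc ω = zc ∧ X ω = x)
          * pr μ (fun ω => X ω = x))
        = ∑ x, ∑ a,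
            condPr μ (fun ω => Y ω = y) (fun ω => A ω = a ∧ X ω = x)
              * (∑ zs, condPr μ (fun ω => A ω = a) (fun ω => Zs ω = zs ∧ Zc ω = zc)
                  * condPr μ (fun ω => Zs ω = zs) (fun ω => Zc ω = zc ∧ X ω = x))
              * pr μ (fun ω => X ω = x) := by
  intro y zc
  refine Finset.sum_congr rfl fun x _ => ?_
  have hPcx : pr μ (fun ω => Zc ω = zc ∧ X ω = x) ≠ 0 := (hpos3 zc x).ne'
  have key : condPr μ (fun ω => Y ω = y) (fun ω => Zc ω = zc ∧ X ω = x)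
      = ∑ a, ∑ zs,
          condPr μ (fun ω => Y ω = y) (fun ω => A ω = a ∧ X ω = x)
            * (condPr μ (fun ω => A ω = a) (fun ω => Zs ω = zs ∧ Zc ω = zc)
                * condPr μ (fun ω => Zs ω = zs) (fun ω => Zc ω = zc ∧ X ω = x)) := by
    have hnum : pr μ (fun ω => Y ω = y ∧ (Zc ω = zc ∧ X ω = x))
        = ∑ a, ∑ zs,
            condPr μ (fun ω => Y ω = y) (fun ω => A ω = a ∧ X ω = x)
              * (condPr μ (fun ω => A ω = a) (fun ω => Zs ω = zs ∧ Zc ω = zc)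
                  * condPr μ (fun ω => Zs ω = zs) (fun ω => Zc ω = zc ∧ X ω = x))
              * pr μ (fun ω => Zc ω = zc ∧ X ω = x) := by
      rw [pr_partition μ _ (fun ω => (A ω, Zs ω)), Fintype.sum_prod_type]
      refine Finset.sum_congr rfl fun a _ => Finset.sum_congr rfl fun zs _ => ?_
      have e1 : pr μ (fun ω => (Y ω = y ∧ Zc ω = zc ∧ X ω = x) ∧ (A ω, Zs ω) = (a, zs))
          = pr μ (fun ω => Y ω = y ∧ (A ω = a ∧ X ω = x ∧ Zc ω = zc ∧ Zs ω = zs)) :=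
        pr_congr μ fun ω => by simp [Prod.ext_iff]; tauto
      have e2 : pr μ (fun ω => A ω = a ∧ X ω = x ∧ Zc ω = zc ∧ Zs ω = zs)
          = pr μ (fun ω => A ω = a ∧ (Zc ω = zc ∧ Zs ω = zs ∧ X ω = x)) :=
        pr_congr μ fun ω => by tauto
      have e3 : pr μ (fun ω => Zc ω = zc ∧ Zs ω = zs ∧ X ω = x)
          = pr μ (fun ω => Zs ω = zs ∧ (Zc ω = zc ∧ X ω = x)) :=
        pr_congr μ fun ω => by tauto
      calc pr μ (fun ω => (Y ω = y ∧ Zc ω = zc ∧ X ω = x) ∧ (A ω, Zs ω) = (a, zs))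
          = condPr μ (fun ω => Y ω = y)
              (fun ω => A ω = a ∧ X ω = x ∧ Zc ω = zc ∧ Zs ω = zs)
            * pr μ (fun ω => A ω = a ∧ X ω = x ∧ Zc ω = zc ∧ Zs ω = zs) := by
            rw [e1, pr_and_eq μ _ _ (hpos1 a x zc zs).ne']
        _ = condPr μ (fun ω => Y ω = y) (fun ω => A ω = a ∧ X ω = x)
            * (condPr μ (fun ω => A ω = a) (fun ω => Zc ω = zc ∧ Zs ω = zs)
              * pr μ (fun ω => Zc ω = zc ∧ Zs ω = zs ∧ X ω = x)) := by
            rw [hY, e2, pr_and_eq μ _ _ (hpos2 zc zs x).ne',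
              show condPr μ (fun ω => A ω = a) (fun ω => Zc ω = zc ∧ Zs ω = zs ∧ X ω = x)
                = condPr μ (fun ω => A ω = a) (fun ω => Zc ω = zc ∧ Zs ω = zs) from hA a zc zs x]
        _ = _ := by
            rw [e3, pr_and_eq μ _ _ hPcx,
              condPr_congr μ (s := fun ω => A ω = a) (s' := fun ω => A ω = a)
                (t := fun ω => Zc ω = zc ∧ Zs ω = zs)
                (t' := fun ω => Zs ω = zs ∧ Zc ω = zc)
                (fun ω => Iff.rfl) (fun ω => by tauto)]
            ring
    refine mul_right_cancel₀ hPcx ?_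
    rw [← pr_and_eq μ _ _ hPcx, hnum, Finset.sum_mul]
    exact Finset.sum_congr rfl fun a _ => by rw [Finset.sum_mul]
  rw [key, Finset.sum_mul]
  refine Finset.sum_congr rfl fun a _ => ?_
  rw [Finset.sum_mul, Finset.mul_sum, Finset.sum_mul]
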